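/- arXiv:cs/0601023 — 2 statements merged into one kernel-verified Lean document; each statement's English description precedes it below -/
import Mathlib

section
/- Fix n and a received vector r ∈ ℝⁿ; let y ∈ 𝔽₂ⁿ be the hard-decision word of r and r′_i = |r_i|. Let C ⊆ 𝔽₂ⁿ be a linear code given as the kernel of a linear map H : 𝔽₂ⁿ → 𝔽₂^m (so c ∈ C iff H c = 0). Then a codeword x ∈ C satisfies d_E(S(x), r) ≤ d_E(S(c), r) for all c ∈ C if and only if the binary word e := x + y satisfies H e = H y and e·r′ ≤ e′·r′ for every binary word e′ ∈ 𝔽₂ⁿ with H e′ = H y. In other words, maximum likelihood decoding of r is achieved by decoding into y + e where e minimizes e·r′ among all binary solutions of the syndrome equation H e = H y. -/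
/-- Tendolkar–Hartmann: for a linear code `C = ker H`, a codeword `x` is a
maximum likelihood codeword for `r` iff the error pattern `e = x + y` solves the
syndrome equation `H e = H y` and minimizes the correlation `e·r′` among all
binary solutions of that equation. -/
theorem ml_decoding_via_syndrome (n m : ℕ) (r : EuclideanSpace ℝ (Fin n))
    (S : (Fin n → ZMod 2) → EuclideanSpace ℝ (Fin n))
    (hS : ∀ x i, S x i = if x i = 0 then 1 else -1)
    (y : Fin n → ZMod 2) (hy : ∀ i, y i = if r i < 0 then 1 else 0)
    (H : (Fin n → ZMod 2) →ₗ[ZMod 2] (Fin m → ZMod 2))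
    (x : Fin n → ZMod 2) (hx : H x = 0) :
    (∀ c : Fin n → ZMod 2, H c = 0 → dist (S x) r ≤ dist (S c) r) ↔
      (H (x + y) = H y ∧
        ∀ e' : Fin n → ZMod 2, H e' = H y →
          ∑ i ∈ Finset.univ.filter (fun i => (x + y) i = 1), |r i| ≤
            ∑ i ∈ Finset.univ.filter (fun i => e' i = 1), |r i|) := by
  classical
  have hzm : ∀ a : ZMod 2, a = 0 ∨ a = 1 := by decide
  set corr : (Fin n → ZMod 2) → ℝ :=
    fun e => ∑ i ∈ Finset.univ.filter (fun i => e i = 1), |r i| with hcorr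
  -- pointwise identity
  have key : ∀ (c : Fin n → ZMod 2) (i : Fin n),
      (S c i - r i) ^ 2 =
        (1 + r i ^ 2 - 2 * |r i|) + 4 * (if (c + y) i = 1 then |r i| else 0) := by
    intro c i
    have hyi := hy i
    rw [hS]
    by_cases hr : r i < 0
    · have habs : |r i| = -r i := abs_of_neg hr
      rw [if_pos hr] at hyi
      rcases hzm (c i) with h | h
      · rw [if_pos h]
        have h1 : (c + y) i = 1 := by simp [h, hyi]
        rw [if_pos h1, habs]; ring
      · rw [if_neg (by rw [h]; decide)]
        have h1 : (c + y) i ≠ 1 := by simp [h, hyi]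
        rw [if_neg h1, habs]; ring
    · have habs : |r i| = r i := abs_of_nonneg (not_lt.mp hr)
      rw [if_neg hr] at hyi
      rcases hzm (c i) with h | h
      · rw [if_pos h]
        have h1 : (c + y) i ≠ 1 := by simp [h, hyi]
        rw [if_neg h1, habs]; ring
      · rw [if_neg (by rw [h]; decide)]
        have h1 : (c + y) i = 1 := by simp [h, hyi]
        rw [if_pos h1, habs]; ring
  -- squared distance formula
  have hsq : ∀ c : Fin n → ZMod 2,
      dist (S c) r ^ 2 =
        (∑ i, (1 + r i ^ 2 - 2 * |r i|)) + 4 * corr (c + y) := by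
    intro c
    have h1 : dist (S c) r ^ 2 = ∑ i, (S c i - r i) ^ 2 := by
      rw [EuclideanSpace.dist_eq, Real.sq_sqrt (by positivity)]
      congr 1; funext i
      rw [Real.dist_eq, sq_abs]
    rw [h1]
    calc ∑ i, (S c i - r i) ^ 2
        = ∑ i, ((1 + r i ^ 2 - 2 * |r i|) + 4 * (if (c + y) i = 1 then |r i| else 0)) := by
          exact Finset.sum_congr rfl fun i _ => key c i
      _ = (∑ i, (1 + r i ^ 2 - 2 * |r i|)) + 4 * corr (c + y) := by
          rw [Finset.sum_add_distrib, ← Finset.mul_sum, hcorr]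
          simp [Finset.sum_filter]
  -- dist comparison iff correlation comparison
  have hcmp : ∀ c : Fin n → ZMod 2,
      dist (S x) r ≤ dist (S c) r ↔ corr (x + y) ≤ corr (c + y) := by
    intro c
    constructor
    · intro h
      have := pow_le_pow_left₀ dist_nonneg h 2
      rw [hsq x, hsq c] at this
      linarith
    · intro h
      have h2 : dist (S x) r ^ 2 ≤ dist (S c) r ^ 2 := by
        rw [hsq x, hsq c]; linarith
      exact (pow_le_pow_iff_left₀ dist_nonneg dist_nonneg two_ne_zero).mp h2
  have hyy : y + y = 0 := by
    funext i; exact CharTwo.add_self_eq_zero (y i)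
  constructor
  · rintro hml
    refine ⟨by rw [map_add, hx, zero_add], fun e' he' => ?_⟩
    have hc : H (e' + y) = 0 := by
      rw [map_add, he', ← map_add, hyy, map_zero]
    have := (hcmp (e' + y)).mp (hml _ hc)
    have heq : e' + y + y = e' := by rw [add_assoc, hyy, add_zero]
    rwa [heq] at this
  · rintro ⟨-, hmin⟩ c hc
    have he' : H (c + y) = H y := by rw [map_add, hc, zero_add]
    exact (hcmp c).mpr (hmin (c + y) he')
end

section
/- Fix n and a received vector r ∈ ℝⁿ; let e ∈ 𝔽₂ⁿ be the hard-decision word of r (the error pattern when the all-zero codeword is transmitted) and r′_i = |r_i|. Let C ⊆ 𝔽₂ⁿ be a linear code containing the all-zero word. If the all-zero codeword is the strict maximum likelihood codeword, i.e. d_E(S(0), r) < d_E(S(c), r) for every nonzero codeword c ∈ C, then e·r′ < (c + e)·r′ for every nonzero codeword c ∈ C. -/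
/-- If the all-zero codeword is the strict maximum likelihood codeword for the
received vector `r`, then the hard-decision error pattern `e` satisfies
`e·r′ < (c + e)·r′` for every nonzero codeword `c`. -/
theorem allzero_ml_error_correlation (n : ℕ) (r : EuclideanSpace ℝ (Fin n))
    (S : (Fin n → ZMod 2) → EuclideanSpace ℝ (Fin n))
    (hS : ∀ x i, S x i = if x i = 0 then 1 else -1)
    (e : Fin n → ZMod 2) (he : ∀ i, e i = if r i < 0 then 1 else 0)
    (C : Submodule (ZMod 2) (Fin n → ZMod 2))
    (hml : ∀ c ∈ C, c ≠ 0 → dist (S 0) r < dist (S c) r) :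
    ∀ c ∈ C, c ≠ 0 →
      ∑ i ∈ Finset.univ.filter (fun i => e i = 1), |r i| <
        ∑ i ∈ Finset.univ.filter (fun i => (c + e) i = 1), |r i| := by
  intro c hc hc0
  have hz : ∀ x : ZMod 2, x = 0 ∨ x = 1 := by decide
  -- positivity of the correlation of c with r
  have hd := hml c hc hc0
  have hd2 : dist (S 0) r ^ 2 < dist (S c) r ^ 2 :=
    pow_lt_pow_left₀ hd dist_nonneg (by norm_num)
  rw [EuclideanSpace.dist_eq, EuclideanSpace.dist_eq,
    Real.sq_sqrt (by positivity), Real.sq_sqrt (by positivity)] at hd2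
  simp only [Real.dist_eq, sq_abs] at hd2
  have hpt : ∀ i, (S c i - r i) ^ 2
      = (S 0 i - r i) ^ 2 + (if c i = 1 then 4 * r i else 0) := by
    intro i
    rw [hS, hS]
    rcases hz (c i) with h | h <;> simp [h] <;> ring
  have hsum : ∑ i, (S c i - r i) ^ 2
      = ∑ i, (S 0 i - r i) ^ 2 + ∑ i, (if c i = 1 then 4 * r i else 0) := by
    rw [← Finset.sum_add_distrib]; exact Finset.sum_congr rfl fun i _ => hpt i
  have hpos : 0 < ∑ i, (if c i = 1 then r i else 0) := by
    have h4 : 0 < ∑ i, (if c i = 1 then 4 * r i else 0) := by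
      rw [hsum] at hd2; linarith
    have : ∑ i, (if c i = 1 then 4 * r i else 0)
        = 4 * ∑ i, (if c i = 1 then r i else 0) := by
      rw [Finset.mul_sum]
      exact Finset.sum_congr rfl fun i _ => by split <;> ring
    linarith [this ▸ h4]
  -- rewrite the two correlations
  have key : ∑ i ∈ Finset.univ.filter (fun i => (c + e) i = 1), |r i|
      = ∑ i ∈ Finset.univ.filter (fun i => e i = 1), |r i|
        + ∑ i, (if c i = 1 then r i else 0) := by
    rw [Finset.sum_filter, Finset.sum_filter, ← Finset.sum_add_distrib]
    refine Finset.sum_congr rfl fun i _ => ?_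
    have hce : (c + e) i = c i + e i := rfl
    have hei := he i
    by_cases hr : r i < 0
    · have habs : |r i| = -r i := abs_of_neg hr
      simp only [hr, if_pos] at hei
      rcases hz (c i) with h | h
      · simp [hce, h, hei, habs]
      · have : c i + e i = 0 := by rw [h, hei]; decide
        simp [hce, this, h, hei, habs]
    · have habs : |r i| = r i := abs_of_nonneg (not_lt.mp hr)
      simp only [hr, if_neg, if_false] at hei
      rcases hz (c i) with h | h
      · simp [hce, h, hei]
      · have : c i + e i = 1 := by rw [h, hei]; decide
        simp [hce, this, h, hei, habs]
  rw [key]; linarith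
end
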